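/- Tail-integral bound for truncated inverse moments: let λ, λ₀, b, K, q > 0 with K > 1, let Y be a nonnegative random variable with λ ≥ λ₀ − Y almost surely, E[ (√T · Y)^q ] ≤ M for some T > 0, and suppose b ≤ λ₀/4 and 1 ≤ b^{-K}. Then E[ λ^{-K} 1{λ ≥ b} ] ≤ 1 + ∫_1^{b^{-K}} P[ λ ≤ x^{-1/K} ] dx ≤ 1 + C (1 + M T^{-q/2} b^{-q-K}) for a constant C depending only on K, q, λ₀. -/

import Mathlib

/-!
By the layer-cake formula, `E[g] = ∫₀^∞ P[g > t] dt` for `g = λ^{-K} 1{λ ≥ b}`. Since `g ≤ b^{-K}`,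
the integral stops at `b^{-K}`; the part `t ≤ 1` contributes at most `1`, and for `t > 1` one has
`{g > t} ⊆ {λ ≤ t^{-1/K}}`. Once `t > (λ₀/2)^{-K}`, the event `λ ≤ t^{-1/K} ≤ λ₀/2` forces
`Y ≥ λ₀/2` because `λ ≥ λ₀ - Y`, and Markov's inequality for `(√T Y)^q` bounds its probability
by `M T^{-q/2} (λ₀/2)^{-q}`. Integrating up to `b^{-K}` and using `b ≤ 1` gives the claim with
`C = (λ₀/2)^{-K} + (λ₀/2)^{-q}`.
-/

open MeasureTheory Set

section LayerCake

variable {Ω : Type*} [MeasurableSpace Ω] (μ : Measure Ω) {g : Ω → ℝ} {a B : ℝ}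

theorem lintegral_ofReal_le_add_setLIntegral_Ioc_meas_lt (hg0 : 0 ≤ᵐ[μ] g)
    (hg : AEMeasurable g μ) (hgB : ∀ᵐ ω ∂μ, g ω ≤ B) (ha : 0 ≤ a) (haB : a ≤ B) :
    ∫⁻ ω, ENNReal.ofReal (g ω) ∂μ
      ≤ ENNReal.ofReal a * μ univ + ∫⁻ t in Ioc a B, μ {ω | t < g ω} := by
  have head : ∫⁻ t in Ioc 0 a, μ {ω | t < g ω} ≤ ENNReal.ofReal a * μ univ :=
    calc ∫⁻ t in Ioc 0 a, μ {ω | t < g ω} ≤ ∫⁻ _ in Ioc 0 a, μ univ :=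
          lintegral_mono fun _ ↦ measure_mono (subset_univ _)
      _ = ENNReal.ofReal a * μ univ := by
          rw [setLIntegral_const, Real.volume_Ioc, sub_zero, mul_comm]
  have tail : ∫⁻ t in Ioi B, μ {ω | t < g ω} = 0 := by
    refine setLIntegral_eq_zero measurableSet_Ioi fun t (ht : B < t) ↦
      measure_eq_zero_iff_ae_notMem.2 ?_
    filter_upwards [hgB] with ω hω
    exact not_lt.2 (hω.trans ht.le)
  rw [lintegral_eq_lintegral_meas_lt μ hg0 hg, ← Ioc_union_Ioi_eq_Ioi ha,
    lintegral_union measurableSet_Ioi (Ioc_disjoint_Ioi le_rfl), ← Ioc_union_Ioi_eq_Ioi haB,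
    lintegral_union measurableSet_Ioi (Ioc_disjoint_Ioi le_rfl), tail, add_zero]
  gcongr

end LayerCake

section RpowNegOneDiv

variable {x y K : ℝ}

theorem lt_rpow_neg_one_div_iff (hx : 0 < x) (hy : 0 < y) (hK : 0 < K) :
    x < y ^ (-(1 : ℝ) / K) ↔ y < x ^ (-K) := by
  rw [neg_div, one_div, ← inv_neg, Real.lt_rpow_inv_iff_of_neg hx hy (neg_lt_zero.2 hK)]

theorem rpow_neg_one_div_lt_iff (hx : 0 < x) (hy : 0 < y) (hK : 0 < K) :
    x ^ (-(1 : ℝ) / K) < y ↔ y ^ (-K) < x := by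
  rw [neg_div, one_div, ← inv_neg, Real.rpow_inv_lt_iff_of_neg hx hy (neg_lt_zero.2 hK)]

end RpowNegOneDiv

section TruncatedInversePower

variable {Ω : Type*} {lam : Ω → ℝ} {b K : ℝ}

theorem rpow_neg_mul_indicator_nonneg (hb : 0 < b) (ω : Ω) :
    0 ≤ lam ω ^ (-K) * {ω' | b ≤ lam ω'}.indicator 1 ω := by
  by_cases h : b ≤ lam ω
  · simpa [h] using Real.rpow_nonneg (hb.le.trans h) _
  · simp [h]

theorem rpow_neg_mul_indicator_le (hb : 0 < b) (hK : 0 ≤ K) (ω : Ω) :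
    lam ω ^ (-K) * {ω' | b ≤ lam ω'}.indicator 1 ω ≤ b ^ (-K) := by
  by_cases h : b ≤ lam ω
  · simpa [h] using Real.rpow_le_rpow_of_nonpos hb h (neg_nonpos.2 hK)
  · simpa [h] using Real.rpow_nonneg hb.le _

theorem setOf_lt_rpow_neg_mul_indicator_subset (hb : 0 < b) (hK : 0 < K) {t : ℝ} (ht : 0 < t) :
    {ω | t < lam ω ^ (-K) * {ω' | b ≤ lam ω'}.indicator 1 ω}
      ⊆ {ω | lam ω ≤ t ^ (-(1 : ℝ) / K)} := by
  intro ω hω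
  by_cases h : b ≤ lam ω
  · have hlt : t < lam ω ^ (-K) := by simpa [h] using hω
    exact ((lt_rpow_neg_one_div_iff (hb.trans_le h) ht hK).2 hlt).le
  · simp [h] at hω
    exact absurd ht (not_lt.2 hω.le)

end TruncatedInversePower

theorem meas_ge_le_ofReal_div_of_lintegral_mul_rpow_le {Ω : Type*} [MeasurableSpace Ω]
    {μ : Measure Ω} {Y : Ω → ℝ} (hY : AEMeasurable Y μ) {s c q M : ℝ} (hs : 0 < s) (hc : 0 < c)
    (hq : 0 ≤ q) (hM : ∫⁻ ω, ENNReal.ofReal ((s * Y ω) ^ q) ∂μ ≤ ENNReal.ofReal M) :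
    μ {ω | c ≤ Y ω} ≤ ENNReal.ofReal (M / (s * c) ^ q) := by
  have hε : 0 < (s * c) ^ q := by positivity
  calc μ {ω | c ≤ Y ω}
      ≤ μ {ω | ENNReal.ofReal ((s * c) ^ q) ≤ ENNReal.ofReal ((s * Y ω) ^ q)} := by
        refine measure_mono fun ω (hω : c ≤ Y ω) ↦ ENNReal.ofReal_le_ofReal ?_
        gcongr
    _ ≤ (∫⁻ ω, ENNReal.ofReal ((s * Y ω) ^ q) ∂μ) / ENNReal.ofReal ((s * c) ^ q) :=
        meas_ge_le_lintegral_div (by fun_prop) (by simpa using hε) ENNReal.ofReal_ne_top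
    _ ≤ ENNReal.ofReal (M / (s * c) ^ q) := by
        rw [ENNReal.ofReal_div_of_pos hε]
        gcongr

theorem setLIntegral_Ioc_le_of_le_one_of_le {f : ℝ → ENNReal} {a A B : ℝ} {c : ENNReal}
    (h_one : ∀ x, f x ≤ 1) (h_tail : ∀ x, A < x → f x ≤ c) :
    ∫⁻ x in Ioc a B, f x ≤ ENNReal.ofReal (A - a) + c * ENNReal.ofReal (B - a) := by
  have hf : ∀ x, f x ≤ (Iic A).indicator 1 x + c := by
    intro x
    by_cases hx : x ≤ A
    · simpa [hx] using (h_one x).trans le_self_add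
    · simpa [hx] using h_tail x (not_le.1 hx)
  calc ∫⁻ x in Ioc a B, f x ≤ ∫⁻ x in Ioc a B, ((Iic A).indicator 1 x + c) := lintegral_mono hf
    _ = volume (Iic A ∩ Ioc a B) + c * ENNReal.ofReal (B - a) := by
        rw [lintegral_add_right _ measurable_const, lintegral_indicator_one measurableSet_Iic,
          Measure.restrict_apply measurableSet_Iic, setLIntegral_const, Real.volume_Ioc]
    _ ≤ ENNReal.ofReal (A - a) + c * ENNReal.ofReal (B - a) := by
        gcongr
        calc volume (Iic A ∩ Ioc a B) ≤ volume (Ioc a A) :=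
              measure_mono fun x hx ↦ ⟨hx.2.1, hx.1⟩
          _ = ENNReal.ofReal (A - a) := Real.volume_Ioc

theorem measure_le_le_meas_ge_of_ae_sub_le {Ω : Type*} [MeasurableSpace Ω] {μ : Measure Ω}
    {lam Y : Ω → ℝ} {lam0 u c : ℝ} (hae : ∀ᵐ ω ∂μ, lam0 - Y ω ≤ lam ω) (hu : u ≤ lam0 - c) :
    μ {ω | lam ω ≤ u} ≤ μ {ω | c ≤ Y ω} := by
  refine measure_mono_ae ?_
  filter_upwards [hae] with ω hω (hωu : lam ω ≤ u)
  change c ≤ Y ω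
  linarith

theorem add_div_sqrt_mul_rpow_mul_le {A T M b c K q : ℝ} (hA : 0 ≤ A) (hT : 0 < T)
    (hM : 0 ≤ M) (hb : 0 < b) (hb1 : b ≤ 1) (hc : 0 < c) (hq : 0 ≤ q) :
    A + M / (Real.sqrt T * c) ^ q * b ^ (-K)
      ≤ (A + c ^ (-q)) * (1 + M * T ^ (-q / 2) * b ^ (-q - K)) := by
  have hcoef : M / (Real.sqrt T * c) ^ q = c ^ (-q) * (M * T ^ (-q / 2)) := by
    rw [Real.mul_rpow (Real.sqrt_nonneg T) hc.le, Real.sqrt_eq_rpow, ← Real.rpow_mul hT.le,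
      Real.rpow_neg hc.le, neg_div, Real.rpow_neg hT.le]
    field_simp
  have hbK : b ^ (-K) ≤ b ^ (-q - K) := Real.rpow_le_rpow_of_exponent_ge hb hb1 (by linarith)
  have hX : 0 ≤ M * T ^ (-q / 2) * b ^ (-q - K) := by positivity
  calc A + M / (Real.sqrt T * c) ^ q * b ^ (-K)
      ≤ A + c ^ (-q) * (M * T ^ (-q / 2) * b ^ (-q - K)) := by
        rw [hcoef, mul_assoc]
        gcongr
    _ ≤ (A + c ^ (-q)) * (1 + M * T ^ (-q / 2) * b ^ (-q - K)) := by
        nlinarith [Real.rpow_nonneg hc.le (-q)]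

section InverseMomentTail

variable {Ω : Type*} [MeasurableSpace Ω] {μ : Measure Ω} [IsProbabilityMeasure μ] {lam : Ω → ℝ}
  {b K : ℝ}

theorem lintegral_rpow_neg_mul_indicator_le (hlam : Measurable lam) (hb : 0 < b) (hK : 0 < K)
    (hbK : 1 ≤ b ^ (-K)) :
    ∫⁻ ω, ENNReal.ofReal (lam ω ^ (-K) * {ω' | b ≤ lam ω'}.indicator 1 ω) ∂μ
      ≤ 1 + ∫⁻ x in Ioc 1 (b ^ (-K)), μ {ω | lam ω ≤ x ^ (-(1 : ℝ) / K)} := by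
  have hmeas : Measurable fun ω ↦ lam ω ^ (-K) * {ω' | b ≤ lam ω'}.indicator 1 ω :=
    (hlam.pow_const _).mul (measurable_const.indicator (measurableSet_le measurable_const hlam))
  calc _ ≤ ENNReal.ofReal 1 * μ univ + ∫⁻ t in Ioc 1 (b ^ (-K)),
          μ {ω | t < lam ω ^ (-K) * {ω' | b ≤ lam ω'}.indicator 1 ω} :=
        lintegral_ofReal_le_add_setLIntegral_Ioc_meas_lt μ
          (ae_of_all _ (rpow_neg_mul_indicator_nonneg hb)) hmeas.aemeasurable
          (ae_of_all _ (rpow_neg_mul_indicator_le hb hK.le)) zero_le_one hbK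
    _ ≤ _ := by
        rw [ENNReal.ofReal_one, one_mul, measure_univ]
        refine add_le_add_right (setLIntegral_mono' measurableSet_Ioc fun t ht ↦ ?_) 1
        exact measure_mono (setOf_lt_rpow_neg_mul_indicator_subset hb hK (one_pos.trans ht.1))

theorem setLIntegral_Ioc_measure_le_rpow_neg_one_div_le {Y : Ω → ℝ} (hY : AEMeasurable Y μ)
    {lam0 T M q B : ℝ} (hae : ∀ᵐ ω ∂μ, lam0 - Y ω ≤ lam ω) (hlam0 : 0 < lam0) (hK : 0 < K)
    (hT : 0 < T) (hM : 0 ≤ M) (hq : 0 ≤ q) (hB : 0 ≤ B)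
    (hmoment : ∫⁻ ω, ENNReal.ofReal ((Real.sqrt T * Y ω) ^ q) ∂μ ≤ ENNReal.ofReal M) :
    ∫⁻ x in Ioc 1 B, μ {ω | lam ω ≤ x ^ (-(1 : ℝ) / K)}
      ≤ ENNReal.ofReal ((lam0 / 2) ^ (-K) + M / (Real.sqrt T * (lam0 / 2)) ^ q * B) := by
  have hc : 0 < lam0 / 2 := half_pos hlam0
  have hmarkov :=
    meas_ge_le_ofReal_div_of_lintegral_mul_rpow_le hY (Real.sqrt_pos.2 hT) hc hq hmoment
  have htail : ∀ x, (lam0 / 2) ^ (-K) < x → μ {ω | lam ω ≤ x ^ (-(1 : ℝ) / K)}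
      ≤ ENNReal.ofReal (M / (Real.sqrt T * (lam0 / 2)) ^ q) := by
    intro x hx
    refine (measure_le_le_meas_ge_of_ae_sub_le hae ?_).trans hmarkov
    have hx0 : 0 < x := (Real.rpow_pos_of_pos hc _).trans hx
    linarith [(rpow_neg_one_div_lt_iff hx0 hc hK).2 hx]
  calc _ ≤ ENNReal.ofReal ((lam0 / 2) ^ (-K) - 1)
        + ENNReal.ofReal (M / (Real.sqrt T * (lam0 / 2)) ^ q) * ENNReal.ofReal (B - 1) :=
        setLIntegral_Ioc_le_of_le_one_of_le (fun _ ↦ prob_le_one) htail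
    _ ≤ ENNReal.ofReal ((lam0 / 2) ^ (-K))
        + ENNReal.ofReal (M / (Real.sqrt T * (lam0 / 2)) ^ q) * ENNReal.ofReal B := by
        gcongr <;> linarith
    _ = _ := by
        rw [← ENNReal.ofReal_mul (by positivity), ← ENNReal.ofReal_add (by positivity)
          (by positivity)]

end InverseMomentTail

/-- Tail-integral bound for truncated inverse moments: for constants `K > 1`, `q > 0`,
`λ₀ > 0` there is a constant `C > 0` (depending only on `K, q, λ₀`) such that for every
probability space, every nonnegative random variable `lam` and nonnegative random variable
`Y` with `lam ≥ λ₀ − Y` a.s., every `T > 0` with `E[(√T · Y)^q] ≤ M`, and every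
`0 < b ≤ λ₀ / 4` with `b^{-K} ≥ 1`, one has
`E[lam^{-K} 1{lam ≥ b}] ≤ 1 + ∫_1^{b^{-K}} P[lam ≤ x^{-1/K}] dx
  ≤ 1 + C (1 + M T^{-q/2} b^{-q-K})`. -/
theorem truncated_inverse_moment_tail_bound
    (K q lam0 : ℝ) (hK : 1 < K) (hq : 0 < q) (hlam0 : 0 < lam0) :
    ∃ C : ℝ, 0 < C ∧
      ∀ (Ω : Type) (_ : MeasurableSpace Ω) (μ : Measure Ω), IsProbabilityMeasure μ →
      ∀ (lam Y : Ω → ℝ), Measurable lam → Measurable Y →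
        (∀ ω, 0 ≤ lam ω) → (∀ ω, 0 ≤ Y ω) →
        (∀ᵐ ω ∂μ, lam0 - Y ω ≤ lam ω) →
      ∀ (T M b : ℝ), 0 < T → 0 ≤ M →
        (∫⁻ ω, ENNReal.ofReal ((Real.sqrt T * Y ω) ^ q) ∂μ ≤ ENNReal.ofReal M) →
        0 < b → b ≤ lam0 / 4 → 1 ≤ b ^ (-K) →
      (∫⁻ ω, ENNReal.ofReal ((lam ω ^ (-K)) * Set.indicator {ω' | b ≤ lam ω'} 1 ω) ∂μ
          ≤ 1 + ∫⁻ x in Ioc (1 : ℝ) (b ^ (-K)), μ {ω | lam ω ≤ x ^ (-(1 : ℝ) / K)}) ∧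
      (1 + ∫⁻ x in Ioc (1 : ℝ) (b ^ (-K)), μ {ω | lam ω ≤ x ^ (-(1 : ℝ) / K)}
          ≤ 1 + ENNReal.ofReal (C * (1 + M * T ^ (-q / 2) * b ^ (-q - K)))) := by
  have hK0 : 0 < K := one_pos.trans hK
  refine ⟨(lam0 / 2) ^ (-K) + (lam0 / 2) ^ (-q), by positivity, ?_⟩
  intro Ω _ μ _ lam Y hlam hY _ _ hae T M b hT hM hmoment hb _ hbK
  have hb1 : b ≤ 1 := by
    by_contra! h
    exact (Real.rpow_lt_one_of_one_lt_of_neg h (neg_lt_zero.2 hK0)).not_ge hbK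
  refine ⟨lintegral_rpow_neg_mul_indicator_le hlam hb hK0 hbK, ?_⟩
  gcongr
  exact (setLIntegral_Ioc_measure_le_rpow_neg_one_div_le hY.aemeasurable hae hlam0 hK0 hT hM hq.le
    (Real.rpow_nonneg hb.le _) hmoment).trans <| ENNReal.ofReal_le_ofReal <|
      add_div_sqrt_mul_rpow_mul_le (by positivity) hT hM hb hb1 (half_pos hlam0) hq.le
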